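/- Let d be a colored (k,l)-partition diagram with m propagating parts. Then d factors uniquely as d = d₁ ∘ d₀ ∘ d₂ where: d₁ is a normally ordered colored upward (k,m)-partition diagram whose propagating parts carry the identity color, d₀ is an element of G(r,m) (a colored permutation diagram on m strands), and d₂ is a normally ordered colored downward (m,l)-partition diagram whose propagating parts carry the identity color. (Uniqueness and existence of this triangular factorization.) -/

import Mathlib

open Relation

/-- The cyclic group of order `r` (multiplicative). -/
abbrev Cr (r : ℕ) := Multiplicative (ZMod r)

/-- A colored `(k,l)`-partition diagram: a set-partition (equivalence relation)
of the `k` top vertices (`Sum.inl`) and `l` bottom vertices (`Sum.inr`),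
together with a color from `C_r` attached to each block. -/
structure CDiag (r k l : ℕ) where
  rel : Setoid (Fin k ⊕ Fin l)
  col : Quotient rel → Cr r

namespace CDiag

/-- Push a setoid forward along a map (equivalence relation generated by the
image relation). -/
def push {α β : Type*} (f : α → β) (s : Setoid α) : Setoid β :=
  Relation.EqvGen.setoid fun x y => ∃ a b, s.r a b ∧ x = f a ∧ y = f b

/-- Top row of the first factor stays on top; its bottom row goes to the middle. -/
def ι₁ {k l m : ℕ} : Fin k ⊕ Fin l → Fin k ⊕ (Fin l ⊕ Fin m) :=
  Sum.map id Sum.inl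

/-- Top row of the second factor goes to the middle; its bottom row stays at the
bottom. -/
def ι₂ {k l m : ℕ} : Fin l ⊕ Fin m → Fin k ⊕ (Fin l ⊕ Fin m) :=
  Sum.inr

/-- The outer (top and bottom) vertices inside the three-row concatenation. -/
def ιo {k l m : ℕ} : Fin k ⊕ Fin m → Fin k ⊕ (Fin l ⊕ Fin m) :=
  Sum.map id Sum.inr

/-- The equivalence relation on the three rows generated by stacking `d₁` on
top of `d₂`. -/
def bigRel {r k l m : ℕ} (d₁ : CDiag r k l) (d₂ : CDiag r l m) :
    Setoid (Fin k ⊕ (Fin l ⊕ Fin m)) :=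
  push (ι₁ (m := m)) d₁.rel ⊔ push (ι₂ (k := k)) d₂.rel

/-- Linear position of a vertex (top row first, then bottom row). -/
def pos {k l : ℕ} : Fin k ⊕ Fin l → ℕ :=
  Sum.elim (fun i => (i : ℕ)) fun j => k + (j : ℕ)

/-- `a` is the canonical (least-position) representative of its block in `d`. -/
def lead {r k l : ℕ} (d : CDiag r k l) (a : Fin k ⊕ Fin l) : Prop :=
  ∀ b, d.rel.r a b → pos a ≤ pos b

/-- Concatenation of colored partition diagrams (all parameters `x_i = 1`):
stack `d₁` on top of `d₂`, identify the bottom row of `d₁` with the top row of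
`d₂`, restrict to the outer rows, color each resulting block by the product of
the colors of all blocks of `d₁` and `d₂` contributing to it, and discard the
components lying entirely in the middle. -/
noncomputable def comp {r k l m : ℕ} (d₁ : CDiag r k l) (d₂ : CDiag r l m) :
    CDiag r k m where
  rel := Setoid.comap ιo (bigRel d₁ d₂)
  col := fun q =>
    (∏ᶠ (a : Fin k ⊕ Fin l)
      (_ : lead d₁ a ∧ (bigRel d₁ d₂).r (ι₁ a) (ιo q.out)),
        d₁.col (Quotient.mk d₁.rel a)) *
    (∏ᶠ (a : Fin l ⊕ Fin m)
      (_ : lead d₂ a ∧ (bigRel d₁ d₂).r (ι₂ a) (ιo q.out)),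
        d₂.col (Quotient.mk d₂.rel a))

/-- The identity diagram: each part `{i, i'}`, all colored by the identity. -/
def idDiag (r k : ℕ) : CDiag r k k :=
  ⟨Relation.EqvGen.setoid fun x y => ∃ i, x = Sum.inl i ∧ y = Sum.inr i,
    fun _ => 1⟩

/-- A block is propagating if it meets both the top and the bottom row. -/
def Propagating {r k l : ℕ} (d : CDiag r k l) (q : Quotient d.rel) : Prop :=
  (∃ i : Fin k, Quotient.mk d.rel (Sum.inl i) = q) ∧
  (∃ j : Fin l, Quotient.mk d.rel (Sum.inr j) = q)

/-- The rank of a colored partition diagram: its number of propagating parts. -/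
noncomputable def rn {r k l : ℕ} (d : CDiag r k l) : ℕ :=
  Nat.card {q : Quotient d.rel // Propagating d q}

end CDiag

open CDiag

/-- `d₀` is a colored permutation diagram on `m` strands: each block is a pair
`{i, σ(i)'}` for a permutation `σ`, with an arbitrary color on each block. -/
def IsPermDiag {r m : ℕ} (d : CDiag r m m) : Prop :=
  ∃ σ : Equiv.Perm (Fin m), ∀ x y, d.rel.r x y ↔
    (x = y ∨ (∃ i, x = Sum.inl i ∧ y = Sum.inr (σ i)) ∨
      (∃ i, y = Sum.inl i ∧ x = Sum.inr (σ i)))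

/-- `j` is the minimal bottom vertex of the block of the top vertex `i`. -/
def IsMinBot {r m l : ℕ} (d : CDiag r m l) (i : Fin m) (j : Fin l) : Prop :=
  d.rel.r (Sum.inl i) (Sum.inr j) ∧
  ∀ j', d.rel.r (Sum.inl i) (Sum.inr j') → j ≤ j'

/-- `j` is the minimal top vertex of the block of the bottom vertex `i`. -/
def IsMinTop {r k m : ℕ} (d : CDiag r k m) (i : Fin m) (j : Fin k) : Prop :=
  d.rel.r (Sum.inr i) (Sum.inl j) ∧
  ∀ j', d.rel.r (Sum.inr i) (Sum.inl j') → j ≤ j'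

/-- A normally ordered colored downward `(m,l)`-partition diagram whose
propagating parts carry the identity color: the `m` top vertices lie in `m`
distinct propagating parts, the parts are normally ordered (ordering the
propagating parts by the minima of their bottom constituents, the `j`-th one
contains top vertex `j`), and all propagating parts have identity color. -/
def IsNormDown {r m l : ℕ} (d : CDiag r m l) : Prop :=
  (∀ i j : Fin m, d.rel.r (Sum.inl i) (Sum.inl j) → i = j) ∧
  (∀ i : Fin m, ∃ j : Fin l, d.rel.r (Sum.inl i) (Sum.inr j)) ∧
  (∀ (i i' : Fin m) (j j' : Fin l),
      IsMinBot d i j → IsMinBot d i' j' → i < i' → j < j') ∧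
  (∀ i : Fin m, d.col (Quotient.mk d.rel (Sum.inl i)) = 1)

/-- A normally ordered colored upward `(k,m)`-partition diagram whose
propagating parts carry the identity color. -/
def IsNormUp {r k m : ℕ} (d : CDiag r k m) : Prop :=
  (∀ i j : Fin m, d.rel.r (Sum.inr i) (Sum.inr j) → i = j) ∧
  (∀ i : Fin m, ∃ j : Fin k, d.rel.r (Sum.inr i) (Sum.inl j)) ∧
  (∀ (i i' : Fin m) (j j' : Fin k),
      IsMinTop d i j → IsMinTop d i' j' → i < i' → j < j') ∧
  (∀ i : Fin m, d.col (Quotient.mk d.rel (Sum.inr i)) = 1)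

/-!
When the middle row of a stack of two diagrams is separated on both sides (no two of its
vertices share a block, neither in the upper nor in the lower diagram), each block of the lower
diagram meeting the middle row is glued to exactly one block of the upper diagram. The relation
and the colors of such a composite are then explicit, and all three stacks occurring in a
triangular factorization are of this kind.

Existence: list the propagating parts of `d` once in the order of their least bottom vertices and
once in the order of their least top vertices. The downward factor sends top vertex `i` to the
`i`-th part of the first list, the upward factor does the same for the second list, and the
permutation factor matches the two lists and carries the colors of the propagating parts.

Uniqueness: a normally ordered downward diagram is determined by its bottom row, by which bottom
vertices propagate and by the colors of the non-propagating parts, because the least bottom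
vertices of its parts, listed by top vertex, form the increasing enumeration of a set read off
the bottom row. These data, and their mirror images for the upward factor, can be read off the
composite; the permutation factor is then determined as well.
-/

namespace CDiag

variable {r k l m : ℕ}

theorem ext_of_col {d d' : CDiag r k l} (h : d.rel = d'.rel)
    (hcol : ∀ x, d.col (.mk _ x) = d'.col (.mk _ x)) : d = d' := by
  obtain ⟨rel, col⟩ := d
  obtain ⟨rel', col'⟩ := d'
  subst h
  congr
  funext q
  induction q using Quotient.ind
  exact hcol _

theorem col_congr (d : CDiag r k l) {x y : Fin k ⊕ Fin l} (h : d.rel.r x y) :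
    d.col (.mk _ x) = d.col (.mk _ y) :=
  congrArg d.col (Quotient.sound h)

theorem exists_lead (d : CDiag r k l) (x : Fin k ⊕ Fin l) : ∃ a, lead d a ∧ d.rel.r a x := by
  obtain ⟨a, ha, hmin⟩ :=
    Set.exists_min_image {b | d.rel.r x b} pos (Set.toFinite _) ⟨x, d.rel.refl x⟩
  exact ⟨a, fun b hb => hmin b (d.rel.trans ha hb), d.rel.symm ha⟩

theorem pos_injective : Function.Injective (pos : Fin k ⊕ Fin l → ℕ) := by
  rintro (a | a) (b | b) h <;> simp only [pos, Sum.elim_inl, Sum.elim_inr] at h <;> grind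

theorem lead_unique {d : CDiag r k l} {a b : Fin k ⊕ Fin l} (ha : lead d a) (hb : lead d b)
    (h : d.rel.r a b) : a = b :=
  pos_injective <| le_antisymm (ha b h) (hb a (d.rel.symm h))

/-- `lead` picks one vertex per block, so this product has exactly one factor. -/
theorem finprod_lead_eq (d : CDiag r k l) {P : Fin k ⊕ Fin l → Prop} (x : Fin k ⊕ Fin l)
    (hP : ∀ u, P u ↔ d.rel.r u x) :
    ∏ᶠ (u) (_ : lead d u ∧ P u), d.col (.mk _ u) = d.col (.mk _ x) := by
  obtain ⟨u₀, hu₀, hu₀x⟩ := exists_lead d x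
  have hcond : ∀ u, (lead d u ∧ P u) = (u = u₀) := fun u => propext <| by
    refine ⟨fun ⟨hu, hux⟩ => lead_unique hu hu₀ (d.rel.trans ((hP u).1 hux) (d.rel.symm hu₀x)),
      ?_⟩
    rintro rfl
    exact ⟨hu₀, (hP _).2 hu₀x⟩
  rw [finprod_congr fun u => finprod_congr_Prop (hcond u) fun _ => rfl, finprod_cond_eq_left,
    col_congr d hu₀x]

theorem finprod_lead_eq_one (d : CDiag r k l) {P : Fin k ⊕ Fin l → Prop} (hP : ∀ u, ¬P u) :
    ∏ᶠ (u) (_ : lead d u ∧ P u), d.col (.mk _ u) = 1 :=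
  finprod_eq_one_of_forall_eq_one fun u => by
    classical
    rw [finprod_eq_if, if_neg fun h => hP u h.2]

def BotSeparated (d : CDiag r k l) : Prop :=
  ∀ i j : Fin l, d.rel.r (.inr i) (.inr j) → i = j

def TopSeparated (d : CDiag r k l) : Prop :=
  ∀ i j : Fin k, d.rel.r (.inl i) (.inl j) → i = j

section compose

variable {d₁ : CDiag r k l} {d₂ : CDiag r l m}

open Classical in
noncomputable def lowKey (d₁ : CDiag r k l) (d₂ : CDiag r l m) (w : Fin l ⊕ Fin m) :
    Quotient d₁.rel ⊕ Quotient d₂.rel :=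
  if h : ∃ i, d₂.rel.r (.inl i) w then .inl (.mk _ (.inr h.choose)) else .inr (.mk _ w)

/-- When the middle row is separated on both sides, every component of the stacked diagram is
a block of `d₁` together with the blocks of `d₂` hanging from its bottom vertices, or a block of
`d₂` not meeting the middle row; `bigKey` labels the components accordingly. -/
noncomputable def bigKey (d₁ : CDiag r k l) (d₂ : CDiag r l m) :
    Fin k ⊕ (Fin l ⊕ Fin m) → Quotient d₁.rel ⊕ Quotient d₂.rel :=
  Sum.elim (fun a => .inl (.mk _ (.inl a))) (lowKey d₁ d₂)

theorem inl_eq_lowKey_iff (ht : TopSeparated d₂) {u : Fin k ⊕ Fin l} {w : Fin l ⊕ Fin m} :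
    .inl (.mk _ u) = lowKey d₁ d₂ w ↔ ∃ i, d₁.rel.r u (.inr i) ∧ d₂.rel.r (.inl i) w := by
  unfold lowKey
  split_ifs with h
  · have hc := h.choose_spec
    refine ⟨fun he => ⟨h.choose, Quotient.exact (Sum.inl_injective he), hc⟩, ?_⟩
    rintro ⟨i, hui, hiw⟩
    obtain rfl := ht _ _ (d₂.rel.trans hiw (d₂.rel.symm hc))
    exact congrArg Sum.inl (Quotient.sound hui)
  · exact ⟨nofun, fun ⟨i, _, hiw⟩ => (h ⟨i, hiw⟩).elim⟩

theorem bigKey_ι₁ (ht : TopSeparated d₂) (u : Fin k ⊕ Fin l) :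
    bigKey d₁ d₂ (ι₁ u) = .inl (.mk _ u) := by
  rcases u with a | i
  · rfl
  · exact ((inl_eq_lowKey_iff ht).2 ⟨i, d₁.rel.refl _, d₂.rel.refl _⟩).symm

theorem lowKey_eq_iff (hb : BotSeparated d₁) (ht : TopSeparated d₂) {w w' : Fin l ⊕ Fin m} :
    lowKey d₁ d₂ w = lowKey d₁ d₂ w' ↔ d₂.rel.r w w' := by
  unfold lowKey
  split_ifs with h h' h'
  · rw [Sum.inl.injEq]
    refine ⟨fun he => ?_, fun hw => ?_⟩
    · have he := hb _ _ (Quotient.exact he)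
      exact d₂.rel.trans (d₂.rel.symm h.choose_spec) (he ▸ h'.choose_spec)
    · rw [ht _ _ (d₂.rel.trans h.choose_spec (d₂.rel.trans hw (d₂.rel.symm h'.choose_spec)))]
  · exact ⟨nofun, fun hw => (h' ⟨h.choose, d₂.rel.trans h.choose_spec hw⟩).elim⟩
  · exact ⟨nofun,
      fun hw => (h ⟨h'.choose, d₂.rel.trans h'.choose_spec (d₂.rel.symm hw)⟩).elim⟩
  · exact ⟨fun he => Quotient.exact (Sum.inr_injective he),
      fun hw => congrArg Sum.inr (Quotient.sound hw)⟩

theorem bigRel_le_ker (hb : BotSeparated d₁) (ht : TopSeparated d₂) :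
    bigRel d₁ d₂ ≤ Setoid.ker (bigKey d₁ d₂) := by
  refine sup_le (Setoid.eqvGen_le ?_) (Setoid.eqvGen_le ?_)
  · rintro _ _ ⟨u, u', h, rfl, rfl⟩
    rw [Setoid.ker_def, bigKey_ι₁ ht, bigKey_ι₁ ht]
    exact congrArg Sum.inl (Quotient.sound h)
  · rintro _ _ ⟨w, w', h, rfl, rfl⟩
    exact (lowKey_eq_iff hb ht).2 h

theorem bigRel_of_rel₁ {u u' : Fin k ⊕ Fin l} (h : d₁.rel.r u u') :
    (bigRel d₁ d₂).r (ι₁ u) (ι₁ u') :=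
  le_sup_left (a := push ι₁ d₁.rel) (Relation.EqvGen.rel _ _ ⟨u, u', h, rfl, rfl⟩)

theorem bigRel_of_rel₂ {w w' : Fin l ⊕ Fin m} (h : d₂.rel.r w w') :
    (bigRel d₁ d₂).r (ι₂ w) (ι₂ w') :=
  le_sup_right (a := push ι₁ d₁.rel) (Relation.EqvGen.rel _ _ ⟨w, w', h, rfl, rfl⟩)

theorem bigRel_ι₁_ι₁_iff (hb : BotSeparated d₁) (ht : TopSeparated d₂)
    {u u' : Fin k ⊕ Fin l} : (bigRel d₁ d₂).r (ι₁ u) (ι₁ u') ↔ d₁.rel.r u u' := by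
  refine ⟨fun h => ?_, bigRel_of_rel₁⟩
  have := bigRel_le_ker hb ht h
  rw [Setoid.ker_def, bigKey_ι₁ ht, bigKey_ι₁ ht] at this
  exact Quotient.exact (Sum.inl_injective this)

theorem bigRel_ι₂_ι₂_iff (hb : BotSeparated d₁) (ht : TopSeparated d₂)
    {w w' : Fin l ⊕ Fin m} : (bigRel d₁ d₂).r (ι₂ w) (ι₂ w') ↔ d₂.rel.r w w' :=
  ⟨fun h => (lowKey_eq_iff hb ht).1 (bigRel_le_ker hb ht h), bigRel_of_rel₂⟩

theorem bigRel_ι₁_ι₂_iff (hb : BotSeparated d₁) (ht : TopSeparated d₂)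
    {u : Fin k ⊕ Fin l} {w : Fin l ⊕ Fin m} :
    (bigRel d₁ d₂).r (ι₁ u) (ι₂ w) ↔ ∃ i, d₁.rel.r u (.inr i) ∧ d₂.rel.r (.inl i) w := by
  refine ⟨fun h => ?_, fun ⟨i, hui, hiw⟩ =>
    (bigRel d₁ d₂).trans (bigRel_of_rel₁ hui) (bigRel_of_rel₂ (w := .inl i) hiw)⟩
  have := bigRel_le_ker hb ht h
  rw [Setoid.ker_def, bigKey_ι₁ ht] at this
  exact (inl_eq_lowKey_iff ht).1 this

theorem comp_rel_inl_inl (hb : BotSeparated d₁) (ht : TopSeparated d₂) {a a' : Fin k} :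
    (comp d₁ d₂).rel.r (.inl a) (.inl a') ↔ d₁.rel.r (.inl a) (.inl a') :=
  bigRel_ι₁_ι₁_iff (u := .inl a) (u' := .inl a') hb ht

theorem comp_rel_inr_inr (hb : BotSeparated d₁) (ht : TopSeparated d₂) {b b' : Fin m} :
    (comp d₁ d₂).rel.r (.inr b) (.inr b') ↔ d₂.rel.r (.inr b) (.inr b') :=
  bigRel_ι₂_ι₂_iff hb ht

theorem comp_rel_inl_inr (hb : BotSeparated d₁) (ht : TopSeparated d₂) {a : Fin k} {b : Fin m} :
    (comp d₁ d₂).rel.r (.inl a) (.inr b) ↔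
      ∃ i, d₁.rel.r (.inl a) (.inr i) ∧ d₂.rel.r (.inl i) (.inr b) :=
  bigRel_ι₁_ι₂_iff (u := .inl a) hb ht

theorem TopSeparated.comp (h₁ : TopSeparated d₁) (hb : BotSeparated d₁) (ht : TopSeparated d₂) :
    TopSeparated (comp d₁ d₂) :=
  fun _ _ h => h₁ _ _ ((comp_rel_inl_inl hb ht).1 h)

theorem ιo_inl (a : Fin k) : ιo (l := l) (m := m) (.inl a) = ι₁ (.inl a) := rfl

theorem ιo_inr (b : Fin m) : ιo (k := k) (l := l) (.inr b) = ι₂ (.inr b) := rfl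

theorem comp_col_mk (x : Fin k ⊕ Fin m) :
    (comp d₁ d₂).col (.mk _ x) =
      (∏ᶠ (u) (_ : lead d₁ u ∧ (bigRel d₁ d₂).r (ι₁ u) (ιo x)), d₁.col (.mk _ u)) *
      ∏ᶠ (w) (_ : lead d₂ w ∧ (bigRel d₁ d₂).r (ι₂ w) (ιo x)), d₂.col (.mk _ w) := by
  have hx : (bigRel d₁ d₂).r (ιo (Quotient.mk (comp d₁ d₂).rel x).out) (ιo x) :=
    Quotient.mk_out (s := (comp d₁ d₂).rel) x
  have hcond : ∀ y, (bigRel d₁ d₂).r y (ιo (Quotient.mk (comp d₁ d₂).rel x).out) =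
      (bigRel d₁ d₂).r y (ιo x) := fun y =>
    propext ⟨fun h => (bigRel d₁ d₂).trans h hx, fun h => (bigRel d₁ d₂).trans h
      ((bigRel d₁ d₂).symm hx)⟩
  show _ * _ = _ * _
  congr 1 <;>
    exact finprod_congr fun u => finprod_congr_Prop (congrArg (_ ∧ ·) (hcond _)) fun _ => rfl

theorem comp_col_inl_of_rel (hb : BotSeparated d₁) (ht : TopSeparated d₂) {a : Fin k} {i : Fin l}
    (hai : d₁.rel.r (.inl a) (.inr i)) :
    (comp d₁ d₂).col (.mk _ (.inl a)) = d₁.col (.mk _ (.inl a)) * d₂.col (.mk _ (.inl i)) := by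
  rw [comp_col_mk, ιo_inl, finprod_lead_eq d₁ (.inl a) fun u => bigRel_ι₁_ι₁_iff hb ht]
  congr 1
  refine finprod_lead_eq d₂ (.inl i) fun w => ?_
  rw [(bigRel d₁ d₂).comm', bigRel_ι₁_ι₂_iff hb ht]
  refine ⟨fun ⟨i', hai', hi'w⟩ => ?_, fun hwi => ⟨i, hai, d₂.rel.symm hwi⟩⟩
  obtain rfl := hb _ _ (d₁.rel.trans (d₁.rel.symm hai') hai)
  exact d₂.rel.symm hi'w

theorem comp_col_inl_of_not (hb : BotSeparated d₁) (ht : TopSeparated d₂) {a : Fin k}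
    (ha : ¬∃ i, d₁.rel.r (.inl a) (.inr i)) :
    (comp d₁ d₂).col (.mk _ (.inl a)) = d₁.col (.mk _ (.inl a)) := by
  rw [comp_col_mk, ιo_inl, finprod_lead_eq d₁ (.inl a) fun u => bigRel_ι₁_ι₁_iff hb ht,
    finprod_lead_eq_one d₂ fun w hw => ?_, mul_one]
  rw [(bigRel d₁ d₂).comm', bigRel_ι₁_ι₂_iff hb ht] at hw
  obtain ⟨i, hai, -⟩ := hw
  exact ha ⟨i, hai⟩

theorem comp_col_inr_of_not (hb : BotSeparated d₁) (ht : TopSeparated d₂) {b : Fin m}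
    (hb' : ¬∃ i, d₂.rel.r (.inr b) (.inl i)) :
    (comp d₁ d₂).col (.mk _ (.inr b)) = d₂.col (.mk _ (.inr b)) := by
  rw [comp_col_mk, ιo_inr, finprod_lead_eq d₂ (.inr b) fun w => bigRel_ι₂_ι₂_iff hb ht,
    finprod_lead_eq_one d₁ fun u hu => ?_, one_mul]
  obtain ⟨i, -, hib⟩ := (bigRel_ι₁_ι₂_iff hb ht).1 hu
  exact hb' ⟨i, d₂.rel.symm hib⟩

end compose

/-- Upward notions are, definitionally, the downward notions of the mirror image. -/
def flip (d : CDiag r k l) : CDiag r l k :=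
  ⟨Setoid.comap Sum.swap d.rel, fun q => d.col (Quotient.map Sum.swap (fun _ _ h => h) q)⟩

theorem flip_flip (d : CDiag r k l) : d.flip.flip = d := by
  refine ext_of_col (Setoid.ext fun x y => ?_) fun x => ?_
  · show d.rel.r x.swap.swap y.swap.swap ↔ _
    rw [Sum.swap_swap, Sum.swap_swap]
  show d.col (.mk _ x.swap.swap) = _
  rw [Sum.swap_swap]

theorem isNormDown_flip_iff {d : CDiag r k m} : IsNormDown d.flip ↔ IsNormUp d := Iff.rfl

theorem isNormUp_flip_iff {d : CDiag r m l} : IsNormUp d.flip ↔ IsNormDown d := Iff.rfl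

theorem propagating_mk_iff (d : CDiag r k l) (x : Fin k ⊕ Fin l) :
    Propagating d (.mk _ x) ↔ (∃ i, d.rel.r x (.inl i)) ∧ ∃ j, d.rel.r x (.inr j) := by
  simp only [Propagating, Quotient.eq]
  exact and_congr (exists_congr fun _ => d.rel.comm') (exists_congr fun _ => d.rel.comm')

theorem rn_flip (d : CDiag r k l) : rn d.flip = rn d := by
  refine Nat.card_congr <| Equiv.subtypeEquiv
    (Quotient.congr (Equiv.sumComm _ _) fun _ _ => by exact Iff.rfl) fun q => ?_
  induction q using Quotient.ind with | _ x =>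
  show Propagating d.flip (.mk _ x) ↔ Propagating d (.mk _ x.swap)
  rw [propagating_mk_iff, propagating_mk_iff, and_comm]
  rfl

section botMins

variable {d : CDiag r k l}

open Classical in
noncomputable def botMins (d : CDiag r k l) : Finset (Fin l) :=
  {j | (∃ a, d.rel.r (.inr j) (.inl a)) ∧ ∀ j', d.rel.r (.inr j) (.inr j') → j ≤ j'}

theorem mem_botMins {j : Fin l} : j ∈ botMins d ↔
    (∃ a, d.rel.r (.inr j) (.inl a)) ∧ ∀ j', d.rel.r (.inr j) (.inr j') → j ≤ j' := by
  classical simp [botMins]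

theorem eq_of_mem_botMins {j j' : Fin l} (hj : j ∈ botMins d) (hj' : j' ∈ botMins d)
    (h : d.rel.r (.inr j) (.inr j')) : j = j' :=
  le_antisymm ((mem_botMins.1 hj).2 _ h) ((mem_botMins.1 hj').2 _ (d.rel.symm h))

theorem exists_mem_botMins {b : Fin l} {a : Fin k} (h : d.rel.r (.inr b) (.inl a)) :
    ∃ j ∈ botMins d, d.rel.r (.inr b) (.inr j) := by
  obtain ⟨j, hj, hmin⟩ := Set.exists_min_image {j | d.rel.r (.inr b) (.inr j)} id
    (Set.toFinite _) ⟨b, d.rel.refl _⟩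
  exact ⟨j, mem_botMins.2 ⟨⟨a, d.rel.trans (d.rel.symm hj) h⟩,
    fun j' hj' => hmin j' (d.rel.trans hj hj')⟩, hj⟩

theorem card_botMins (d : CDiag r k l) : (botMins d).card = rn d := by
  rw [rn, ← Nat.card_eq_finsetCard]
  refine Nat.card_congr (Equiv.ofBijective (fun j => ⟨.mk _ (.inr j.1), ?_⟩) ⟨?_, ?_⟩)
  · obtain ⟨⟨a, hja⟩, -⟩ := mem_botMins.1 j.2
    exact (propagating_mk_iff d _).2 ⟨⟨a, hja⟩, ⟨j, d.rel.refl _⟩⟩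
  · rintro ⟨j, hj⟩ ⟨j', hj'⟩ h
    exact Subtype.ext (eq_of_mem_botMins hj hj' (Quotient.exact (congrArg Subtype.val h)))
  · rintro ⟨q, hq⟩
    induction q using Quotient.ind with | _ x =>
    obtain ⟨⟨a, hxa⟩, ⟨b, hxb⟩⟩ := (propagating_mk_iff d x).1 hq
    obtain ⟨j, hj, hbj⟩ := exists_mem_botMins (d.rel.trans (d.rel.symm hxb) hxa)
    exact ⟨⟨j, hj⟩, Subtype.ext (Quotient.sound (d.rel.symm (d.rel.trans hxb hbj)))⟩

end botMins

theorem exists_isMinBot (d : CDiag r m l) {i : Fin m} (hi : ∃ j, d.rel.r (.inl i) (.inr j)) :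
    ∃ j, IsMinBot d i j := by
  obtain ⟨j, hj, hmin⟩ := Set.exists_min_image {j | d.rel.r (.inl i) (.inr j)} id
    (Set.toFinite _) hi
  exact ⟨j, hj, hmin⟩

namespace IsNormDown

variable {d : CDiag r m l}

noncomputable def minBot (h : IsNormDown d) (i : Fin m) : Fin l :=
  (exists_isMinBot d (h.2.1 i)).choose

theorem isMinBot_minBot (h : IsNormDown d) (i : Fin m) : IsMinBot d i (h.minBot i) :=
  (exists_isMinBot d (h.2.1 i)).choose_spec

theorem strictMono_minBot (h : IsNormDown d) : StrictMono h.minBot :=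
  fun _ _ hii' => h.2.2.1 _ _ _ _ (h.isMinBot_minBot _) (h.isMinBot_minBot _) hii'

theorem range_minBot (h : IsNormDown d) : Set.range h.minBot =
    botMins d := by
  ext j
  rw [Finset.mem_coe, mem_botMins]
  constructor
  · rintro ⟨i, rfl⟩
    obtain ⟨hij, hmin⟩ := h.isMinBot_minBot i
    exact ⟨⟨i, d.rel.symm hij⟩, fun j' hj' => hmin j' (d.rel.trans hij hj')⟩
  · rintro ⟨⟨i, hji⟩, hmin⟩
    obtain ⟨hij, hmin'⟩ := h.isMinBot_minBot i
    exact ⟨i, le_antisymm (hmin' j (d.rel.symm hji)) (hmin _ (d.rel.trans hji hij))⟩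

theorem rel_inl_inr_iff (h : IsNormDown d) {i : Fin m} {b : Fin l} :
    d.rel.r (.inl i) (.inr b) ↔ d.rel.r (.inr (h.minBot i)) (.inr b) :=
  have hi := (h.isMinBot_minBot i).1
  ⟨d.rel.trans (d.rel.symm hi), d.rel.trans hi⟩

theorem ext {d' : CDiag r m l} (h : IsNormDown d) (h' : IsNormDown d')
    (hrel : ∀ b b', d.rel.r (.inr b) (.inr b') ↔ d'.rel.r (.inr b) (.inr b'))
    (hprop : ∀ b, (∃ i, d.rel.r (.inr b) (.inl i)) ↔ ∃ i, d'.rel.r (.inr b) (.inl i))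
    (hcol : ∀ b, (¬∃ i, d.rel.r (.inr b) (.inl i)) →
      d.col (.mk _ (.inr b)) = d'.col (.mk _ (.inr b))) :
    d = d' := by
  -- Normal ordering makes `minBot` the increasing enumeration of a set read off the bottom row.
  have hmin : h.minBot = h'.minBot := by
    rw [← h.strictMono_minBot.range_inj h'.strictMono_minBot, h.range_minBot, h'.range_minBot]
    congr 1
    ext j
    simp only [mem_botMins, hrel, hprop]
  have hcross : ∀ i b, d.rel.r (.inl i) (.inr b) ↔ d'.rel.r (.inl i) (.inr b) := fun i b => by
    rw [h.rel_inl_inr_iff, h'.rel_inl_inr_iff, hrel, hmin]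
  have htop : ∀ e : CDiag r m l, IsNormDown e → ∀ i i', e.rel.r (.inl i) (.inl i') ↔ i = i' :=
    fun e he i i' => ⟨he.1 i i', by rintro rfl; exact e.rel.refl _⟩
  have hrelEq : d.rel = d'.rel := by
    ext (i | b) (i' | b')
    · exact (htop d h i i').trans (htop d' h' i i').symm
    · exact hcross i b'
    · exact d.rel.comm'.trans ((hcross i' b).trans d'.rel.comm')
    · exact hrel b b'
  refine ext_of_col hrelEq ?_
  rintro (i | b)
  · rw [h.2.2.2 i, h'.2.2.2 i]
  · by_cases hb : ∃ i, d.rel.r (.inr b) (.inl i)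
    · obtain ⟨i, hbi⟩ := hb
      have hbi' : d'.rel.r (.inr b) (.inl i) := hrelEq ▸ hbi
      rw [col_congr d hbi, col_congr d' hbi', h.2.2.2 i, h'.2.2.2 i]
    · exact hcol b hb

end IsNormDown

theorem IsNormUp.ext {d d' : CDiag r k m} (h : IsNormUp d) (h' : IsNormUp d')
    (hrel : ∀ a a', d.rel.r (.inl a) (.inl a') ↔ d'.rel.r (.inl a) (.inl a'))
    (hprop : ∀ a, (∃ i, d.rel.r (.inl a) (.inr i)) ↔ ∃ i, d'.rel.r (.inl a) (.inr i))
    (hcol : ∀ a, (¬∃ i, d.rel.r (.inl a) (.inr i)) →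
      d.col (.mk _ (.inl a)) = d'.col (.mk _ (.inl a))) :
    d = d' := by
  rw [← flip_flip d, ← flip_flip d',
    IsNormDown.ext (isNormDown_flip_iff.2 h) (isNormDown_flip_iff.2 h') hrel hprop hcol]

section enum

variable {d : CDiag r k l}

/-- The least bottom vertices of the propagating parts, in increasing order. -/
noncomputable def botEnum (d : CDiag r k l) (h : rn d = m) : Fin m ↪o Fin l :=
  (botMins d).orderEmbOfFin ((card_botMins d).trans h)

variable (h : rn d = m)

theorem botEnum_mem (i : Fin m) : botEnum d h i ∈ botMins d :=
  Finset.orderEmbOfFin_mem _ _ i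

theorem botEnum_rel_iff {i i' : Fin m} :
    d.rel.r (.inr (botEnum d h i)) (.inr (botEnum d h i')) ↔ i = i' :=
  ⟨fun hr => (botEnum d h).injective (eq_of_mem_botMins (botEnum_mem h i) (botEnum_mem h i') hr),
    by rintro rfl; exact d.rel.refl _⟩

theorem exists_rel_botEnum {b : Fin l} {a : Fin k} (hba : d.rel.r (.inr b) (.inl a)) :
    ∃ i, d.rel.r (.inr b) (.inr (botEnum d h i)) := by
  obtain ⟨j, hj, hbj⟩ := exists_mem_botMins hba
  rw [← Finset.mem_coe, ← Finset.range_orderEmbOfFin _ ((card_botMins d).trans h)] at hj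
  obtain ⟨i, rfl⟩ := hj
  exact ⟨i, hbj⟩

/-- The least top vertices of the propagating parts, in increasing order. -/
noncomputable def topEnum (d : CDiag r k l) (h : rn d = m) : Fin m ↪o Fin k :=
  botEnum d.flip ((rn_flip d).trans h)

theorem topEnum_rel_iff {i i' : Fin m} :
    d.rel.r (.inl (topEnum d h i)) (.inl (topEnum d h i')) ↔ i = i' :=
  botEnum_rel_iff (d := d.flip) _

theorem exists_rel_topEnum {a : Fin k} {b : Fin l} (hab : d.rel.r (.inl a) (.inr b)) :
    ∃ i, d.rel.r (.inl a) (.inl (topEnum d h i)) :=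
  exists_rel_botEnum (d := d.flip) _ hab

theorem exists_rel_topEnum_botEnum (i : Fin m) :
    ∃ j, d.rel.r (.inl (topEnum d h i)) (.inr (botEnum d h j)) := by
  obtain ⟨b, hb⟩ := (mem_botMins.1 (botEnum_mem (d := d.flip) ((rn_flip d).trans h) i)).1
  obtain ⟨j, hbj⟩ := exists_rel_botEnum h (d.rel.symm hb)
  exact ⟨j, d.rel.trans hb hbj⟩

/-- The permutation sending the position of a propagating part in the order of least top
vertices to its position in the order of least bottom vertices. -/
noncomputable def blockPerm (d : CDiag r k l) (h : rn d = m) : Equiv.Perm (Fin m) :=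
  Equiv.ofBijective (fun i => (exists_rel_topEnum_botEnum h i).choose) <|
    Finite.injective_iff_bijective.1 fun i i' hii' => by
      have hi := (exists_rel_topEnum_botEnum h i).choose_spec
      have hi' := (exists_rel_topEnum_botEnum h i').choose_spec
      rw [← hii'] at hi'
      exact (topEnum_rel_iff h).1 (d.rel.trans hi (d.rel.symm hi'))

theorem rel_topEnum_botEnum_blockPerm (i : Fin m) :
    d.rel.r (.inl (topEnum d h i)) (.inr (botEnum d h (blockPerm d h i))) :=
  (exists_rel_topEnum_botEnum h i).choose_spec

end enum

section factors

variable {d : CDiag r k l}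

open Classical in
noncomputable def downCol (d : CDiag r k l) (b : Fin l) : Cr r :=
  if ∃ a, d.rel.r (.inr b) (.inl a) then 1 else d.col (.mk _ (.inr b))

theorem downCol_congr {b b' : Fin l} (h : d.rel.r (.inr b) (.inr b')) :
    downCol d b = downCol d b' := by
  have hprop : (∃ a, d.rel.r (.inr b) (.inl a)) ↔ ∃ a, d.rel.r (.inr b') (.inl a) :=
    exists_congr fun _ => ⟨d.rel.trans (d.rel.symm h), d.rel.trans h⟩
  unfold downCol
  split_ifs with h₁ h₂ h₂
  · rfl
  · exact absurd (hprop.1 h₁) h₂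
  · exact absurd (hprop.2 h₂) h₁
  · exact col_congr d h

theorem downCol_botEnum_rel {h : rn d = m} {i : Fin m} {b : Fin l}
    (hb : d.rel.r (.inr (botEnum d h i)) (.inr b)) : downCol d b = 1 := by
  obtain ⟨a, ha⟩ := (mem_botMins.1 (botEnum_mem h i)).1
  exact if_pos ⟨a, d.rel.trans (d.rel.symm hb) ha⟩

/-- Top vertex `i` joins the `i`-th propagating part of `d` in the order of least bottom
vertices; propagating parts get the identity color, the others keep theirs. -/
noncomputable def downFactor (d : CDiag r k l) (h : rn d = m) : CDiag r m l where
  rel := Setoid.comap (Sum.elim (fun i => .inr (botEnum d h i)) .inr) d.rel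
  col := Quotient.lift (Sum.elim 1 (downCol d)) <| by
    rintro (i | b) (i' | b') hr
    · rfl
    · exact (downCol_botEnum_rel hr).symm
    · exact downCol_botEnum_rel (d.rel.symm hr)
    · exact downCol_congr hr

theorem isNormDown_downFactor (h : rn d = m) : IsNormDown (downFactor d h) := by
  have hmin : ∀ i j, IsMinBot (downFactor d h) i j → j = botEnum d h i := fun i j ⟨hij, hmin⟩ =>
    le_antisymm (hmin _ (d.rel.refl _)) ((mem_botMins.1 (botEnum_mem h i)).2 j hij)
  refine ⟨fun i i' hr => (botEnum_rel_iff h).1 hr, fun i => ⟨botEnum d h i, d.rel.refl _⟩,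
    fun i i' j j' hj hj' hii' => ?_, fun i => rfl⟩
  rw [hmin i j hj, hmin i' j' hj']
  exact (botEnum d h).strictMono hii'

noncomputable def upFactor (d : CDiag r k l) (h : rn d = m) : CDiag r k m :=
  (downFactor d.flip ((rn_flip d).trans h)).flip

theorem isNormUp_upFactor (h : rn d = m) : IsNormUp (upFactor d h) :=
  isNormUp_flip_iff.2 (isNormDown_downFactor _)

/-- The blocks are `{i, (σ i)'}`, colored `c i`. -/
def permDiag (σ : Equiv.Perm (Fin m)) (c : Fin m → Cr r) : CDiag r m m where
  rel := Setoid.ker (Sum.elim σ id)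
  col := Quotient.lift (fun x => c (σ.symm (Sum.elim σ id x))) fun _ _ h =>
    congrArg (c ∘ σ.symm) h

theorem isPermDiag_permDiag (σ : Equiv.Perm (Fin m)) (c : Fin m → Cr r) :
    IsPermDiag (permDiag σ c) := by
  refine ⟨σ, fun x y => ?_⟩
  change Sum.elim σ id x = Sum.elim σ id y ↔ _
  rcases x with i | j <;> rcases y with i' | j' <;> simp [eq_comm]

noncomputable def permFactor (d : CDiag r k l) (h : rn d = m) : CDiag r m m :=
  permDiag (blockPerm d h) fun i => d.col (.mk _ (.inl (topEnum d h i)))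

end factors

namespace IsPermDiag

variable {d : CDiag r m m}

theorem rel_inl_inr_iff {σ : Equiv.Perm (Fin m)}
    (hσ : ∀ x y, d.rel.r x y ↔ (x = y ∨ (∃ i, x = .inl i ∧ y = .inr (σ i)) ∨
      (∃ i, y = .inl i ∧ x = .inr (σ i)))) {i j : Fin m} :
    d.rel.r (.inl i) (.inr j) ↔ σ i = j := by
  rw [hσ]
  simp [eq_comm]

theorem topSeparated (h : IsPermDiag d) : TopSeparated d := by
  obtain ⟨σ, hσ⟩ := h
  intro i j hij
  simpa using (hσ _ _).1 hij

theorem botSeparated (h : IsPermDiag d) : BotSeparated d := by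
  obtain ⟨σ, hσ⟩ := h
  intro i j hij
  simpa using (hσ _ _).1 hij

theorem exists_rel_inr (h : IsPermDiag d) (i : Fin m) : ∃ j, d.rel.r (.inl i) (.inr j) := by
  obtain ⟨σ, hσ⟩ := h
  exact ⟨σ i, (rel_inl_inr_iff hσ).2 rfl⟩

theorem exists_rel_inl (h : IsPermDiag d) (j : Fin m) : ∃ i, d.rel.r (.inl i) (.inr j) := by
  obtain ⟨σ, hσ⟩ := h
  exact ⟨σ.symm j, (rel_inl_inr_iff hσ).2 (σ.apply_symm_apply j)⟩

theorem ext {d' : CDiag r m m} (h : IsPermDiag d) (h' : IsPermDiag d')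
    (hrel : ∀ i j, d.rel.r (.inl i) (.inr j) ↔ d'.rel.r (.inl i) (.inr j))
    (hcol : ∀ i, d.col (.mk _ (.inl i)) = d'.col (.mk _ (.inl i))) : d = d' := by
  obtain ⟨σ, hσ⟩ := h
  obtain ⟨σ', hσ'⟩ := h'
  have hσσ' : σ = σ' := Equiv.ext fun i =>
    ((rel_inl_inr_iff hσ').1 ((hrel _ _).1 ((rel_inl_inr_iff hσ).2 rfl))).symm
  have hrelEq : d.rel = d'.rel := Setoid.ext fun x y => by rw [hσ, hσ', hσσ']
  refine ext_of_col hrelEq ?_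
  rintro (i | j)
  · exact hcol i
  · obtain ⟨i, hij⟩ := exists_rel_inl ⟨σ, hσ⟩ j
    have hij' : d'.rel.r (.inl i) (.inr j) := hrelEq ▸ hij
    rw [← col_congr d hij, ← col_congr d' hij', hcol]

end IsPermDiag

def IsTriangular (d₁ : CDiag r k m) (d₀ : CDiag r m m) (d₂ : CDiag r m l) : Prop :=
  IsNormUp d₁ ∧ IsPermDiag d₀ ∧ IsNormDown d₂

namespace IsTriangular

variable {d₁ : CDiag r k m} {d₀ : CDiag r m m} {d₂ : CDiag r m l}

theorem topSeparated_comp (h : IsTriangular d₁ d₀ d₂) : TopSeparated (comp d₀ d₂) :=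
  h.2.1.topSeparated.comp h.2.1.botSeparated h.2.2.1

theorem rel_inl_inl (h : IsTriangular d₁ d₀ d₂) {a a' : Fin k} :
    (comp d₁ (comp d₀ d₂)).rel.r (.inl a) (.inl a') ↔ d₁.rel.r (.inl a) (.inl a') :=
  comp_rel_inl_inl h.1.1 h.topSeparated_comp

theorem rel_inr_inr (h : IsTriangular d₁ d₀ d₂) {b b' : Fin l} :
    (comp d₁ (comp d₀ d₂)).rel.r (.inr b) (.inr b') ↔ d₂.rel.r (.inr b) (.inr b') :=
  (comp_rel_inr_inr h.1.1 h.topSeparated_comp).trans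
    (comp_rel_inr_inr h.2.1.botSeparated h.2.2.1)

theorem rel_inl_inr (h : IsTriangular d₁ d₀ d₂) {a : Fin k} {b : Fin l} :
    (comp d₁ (comp d₀ d₂)).rel.r (.inl a) (.inr b) ↔ ∃ i j, d₁.rel.r (.inl a) (.inr i) ∧
      d₀.rel.r (.inl i) (.inr j) ∧ d₂.rel.r (.inl j) (.inr b) := by
  simp only [comp_rel_inl_inr h.1.1 h.topSeparated_comp,
    comp_rel_inl_inr h.2.1.botSeparated h.2.2.1, exists_and_left]

theorem rel_inl_inr_iff_of_rel (h : IsTriangular d₁ d₀ d₂) {a : Fin k} {b : Fin l} {i j : Fin m}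
    (hai : d₁.rel.r (.inl a) (.inr i)) (hjb : d₂.rel.r (.inl j) (.inr b)) :
    (comp d₁ (comp d₀ d₂)).rel.r (.inl a) (.inr b) ↔ d₀.rel.r (.inl i) (.inr j) := by
  rw [h.rel_inl_inr]
  refine ⟨fun ⟨i', j', hai', hi'j', hj'b⟩ => ?_, fun hij => ⟨i, j, hai, hij, hjb⟩⟩
  obtain rfl := h.1.1 _ _ (d₁.rel.trans (d₁.rel.symm hai') hai)
  obtain rfl := h.2.2.1 _ _ (d₂.rel.trans hj'b (d₂.rel.symm hjb))
  exact hi'j'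

theorem exists_rel_inr_iff (h : IsTriangular d₁ d₀ d₂) {a : Fin k} :
    (∃ b, (comp d₁ (comp d₀ d₂)).rel.r (.inl a) (.inr b)) ↔
      ∃ i, d₁.rel.r (.inl a) (.inr i) := by
  simp only [h.rel_inl_inr]
  refine ⟨fun ⟨_, i, _, hai, _⟩ => ⟨i, hai⟩, fun ⟨i, hai⟩ => ?_⟩
  obtain ⟨j, hij⟩ := h.2.1.exists_rel_inr i
  obtain ⟨b, hjb⟩ := h.2.2.2.1 j
  exact ⟨b, i, j, hai, hij, hjb⟩

theorem exists_rel_inl_iff (h : IsTriangular d₁ d₀ d₂) {b : Fin l} :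
    (∃ a, (comp d₁ (comp d₀ d₂)).rel.r (.inr b) (.inl a)) ↔
      ∃ j, d₂.rel.r (.inr b) (.inl j) := by
  simp only [(comp d₁ (comp d₀ d₂)).rel.comm' (x := .inr b), d₂.rel.comm' (x := .inr b),
    h.rel_inl_inr]
  refine ⟨fun ⟨_, _, j, _, _, hjb⟩ => ⟨j, hjb⟩, fun ⟨j, hjb⟩ => ?_⟩
  obtain ⟨i, hij⟩ := h.2.1.exists_rel_inl j
  obtain ⟨a, hia⟩ := h.1.2.1 i
  exact ⟨a, i, j, d₁.rel.symm hia, hij, hjb⟩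

theorem col_inl_of_rel (h : IsTriangular d₁ d₀ d₂) {a : Fin k} {i j : Fin m}
    (hai : d₁.rel.r (.inl a) (.inr i)) (hij : d₀.rel.r (.inl i) (.inr j)) :
    (comp d₁ (comp d₀ d₂)).col (.mk _ (.inl a)) = d₀.col (.mk _ (.inl i)) := by
  rw [comp_col_inl_of_rel h.1.1 h.topSeparated_comp hai,
    comp_col_inl_of_rel h.2.1.botSeparated h.2.2.1 hij, col_congr d₁ hai, h.1.2.2.2,
    h.2.2.2.2.2, one_mul, mul_one]

theorem col_inl_of_not (h : IsTriangular d₁ d₀ d₂) {a : Fin k}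
    (ha : ¬∃ i, d₁.rel.r (.inl a) (.inr i)) :
    (comp d₁ (comp d₀ d₂)).col (.mk _ (.inl a)) = d₁.col (.mk _ (.inl a)) :=
  comp_col_inl_of_not h.1.1 h.topSeparated_comp ha

theorem col_inr_of_not (h : IsTriangular d₁ d₀ d₂) {b : Fin l}
    (hb : ¬∃ j, d₂.rel.r (.inr b) (.inl j)) :
    (comp d₁ (comp d₀ d₂)).col (.mk _ (.inr b)) = d₂.col (.mk _ (.inr b)) := by
  have hb' : ¬∃ i, (comp d₀ d₂).rel.r (.inr b) (.inl i) := by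
    rintro ⟨i, hbi⟩
    obtain ⟨j, -, hjb⟩ :=
      (comp_rel_inl_inr h.2.1.botSeparated h.2.2.1).1 ((comp d₀ d₂).rel.symm hbi)
    exact hb ⟨j, d₂.rel.symm hjb⟩
  rw [comp_col_inr_of_not h.1.1 h.topSeparated_comp hb',
    comp_col_inr_of_not h.2.1.botSeparated h.2.2.1 hb]

theorem eq_of_comp_eq {d₁' : CDiag r k m} {d₀' : CDiag r m m} {d₂' : CDiag r m l}
    (h : IsTriangular d₁ d₀ d₂) (h' : IsTriangular d₁' d₀' d₂')
    (he : comp d₁ (comp d₀ d₂) = comp d₁' (comp d₀' d₂')) :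
    d₁ = d₁' ∧ d₀ = d₀' ∧ d₂ = d₂' := by
  have e₁ : d₁ = d₁' := h.1.ext h'.1 (fun a a' => by rw [← h.rel_inl_inl, he, h'.rel_inl_inl])
    (fun a => by rw [← h.exists_rel_inr_iff, he, h'.exists_rel_inr_iff])
    (fun a ha => by
      rw [← h.col_inl_of_not ha, he, h'.col_inl_of_not (h'.exists_rel_inr_iff.not.1 ?_)]
      rwa [← he, h.exists_rel_inr_iff])
  have e₂ : d₂ = d₂' := h.2.2.ext h'.2.2 (fun b b' => by rw [← h.rel_inr_inr, he, h'.rel_inr_inr])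
    (fun b => by rw [← h.exists_rel_inl_iff, he, h'.exists_rel_inl_iff])
    (fun b hb => by
      rw [← h.col_inr_of_not hb, he, h'.col_inr_of_not (h'.exists_rel_inl_iff.not.1 ?_)]
      rwa [← he, h.exists_rel_inl_iff])
  subst e₁ e₂
  refine ⟨rfl, h.2.1.ext h'.2.1 (fun i j => ?_) (fun i => ?_), rfl⟩
  · obtain ⟨a, hia⟩ := h.1.2.1 i
    obtain ⟨b, hjb⟩ := h.2.2.2.1 j
    rw [← h.rel_inl_inr_iff_of_rel (d₁.rel.symm hia) hjb, he,
      h'.rel_inl_inr_iff_of_rel (d₁.rel.symm hia) hjb]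
  · obtain ⟨a, hia⟩ := h.1.2.1 i
    obtain ⟨j, hij⟩ := h.2.1.exists_rel_inr i
    obtain ⟨j', hij'⟩ := h'.2.1.exists_rel_inr i
    rw [← h.col_inl_of_rel (d₁.rel.symm hia) hij, he, h'.col_inl_of_rel (d₁.rel.symm hia) hij']

end IsTriangular

section existence

variable {d : CDiag r k l}

theorem isTriangular_factors (h : rn d = m) :
    IsTriangular (upFactor d h) (permFactor d h) (downFactor d h) :=
  ⟨isNormUp_upFactor h, isPermDiag_permDiag _ _, isNormDown_downFactor h⟩

theorem comp_factors_rel (h : rn d = m) :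
    (comp (upFactor d h) (comp (permFactor d h) (downFactor d h))).rel = d.rel := by
  have hT := isTriangular_factors h
  have hcross : ∀ a b, (comp (upFactor d h) (comp (permFactor d h) (downFactor d h))).rel.r
      (.inl a) (.inr b) ↔ d.rel.r (.inl a) (.inr b) := fun a b => by
    rw [hT.rel_inl_inr]
    constructor
    · rintro ⟨i, _, hai, rfl, hjb⟩
      exact d.rel.trans hai (d.rel.trans (rel_topEnum_botEnum_blockPerm h i) hjb)
    · intro hab
      obtain ⟨i, hai⟩ := exists_rel_topEnum h hab
      have hib := rel_topEnum_botEnum_blockPerm h i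
      exact ⟨i, _, hai, rfl, d.rel.trans (d.rel.symm hib) (d.rel.trans (d.rel.symm hai) hab)⟩
  ext (a | b) (a' | b')
  · exact hT.rel_inl_inl
  · exact hcross a b'
  · exact (Setoid.comm' _).trans ((hcross a' b).trans d.rel.comm')
  · exact hT.rel_inr_inr

theorem comp_factors_col_inl (h : rn d = m) (a : Fin k) :
    (comp (upFactor d h) (comp (permFactor d h) (downFactor d h))).col (.mk _ (.inl a)) =
      d.col (.mk _ (.inl a)) := by
  have hT := isTriangular_factors h
  by_cases ha : ∃ i, d.rel.r (.inl a) (.inl (topEnum d h i))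
  · obtain ⟨i, hai⟩ := ha
    rw [hT.col_inl_of_rel (j := blockPerm d h i) hai rfl, col_congr d hai]
    exact congrArg (fun i => d.col (.mk _ (.inl (topEnum d h i))))
      ((blockPerm d h).symm_apply_apply i)
  · rw [hT.col_inl_of_not ha]
    exact if_neg fun ⟨b, hab⟩ => ha (exists_rel_topEnum h hab)

theorem comp_factors_eq (h : rn d = m) :
    comp (upFactor d h) (comp (permFactor d h) (downFactor d h)) = d := by
  have hT := isTriangular_factors h
  refine ext_of_col (comp_factors_rel h) ?_
  rintro (a | b)
  · exact comp_factors_col_inl h a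
  by_cases hb : ∃ a, d.rel.r (.inr b) (.inl a)
  · obtain ⟨a, hba⟩ := hb
    have hba' := (comp_factors_rel h).symm ▸ hba
    rw [col_congr _ hba', col_congr d hba, comp_factors_col_inl]
  · have hb' : ¬∃ j, (downFactor d h).rel.r (.inr b) (.inl j) := by
      rintro ⟨j, hbj⟩
      obtain ⟨a, ha⟩ := (mem_botMins.1 (botEnum_mem h j)).1
      exact hb ⟨a, d.rel.trans hbj ha⟩
    rw [hT.col_inr_of_not hb']
    exact if_neg hb

end existence

end CDiag

/-- Triangular factorization: every colored `(k,l)`-partition diagram `d` with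
`m` propagating parts factors uniquely as `d = d₁ ∘ d₀ ∘ d₂` with `d₁` a
normally ordered colored upward diagram, `d₀ ∈ G(r,m)` a colored permutation
diagram, and `d₂` a normally ordered colored downward diagram, the propagating
parts of `d₁` and `d₂` carrying the identity color. -/
theorem triangular_factorization (r k l m : ℕ) (d : CDiag r k l)
    (hm : rn d = m) :
    ∃! t : CDiag r k m × CDiag r m m × CDiag r m l,
      IsNormUp t.1 ∧ IsPermDiag t.2.1 ∧ IsNormDown t.2.2 ∧
      comp t.1 (comp t.2.1 t.2.2) = d := by
  obtain ⟨h₁, h₀, h₂⟩ := isTriangular_factors hm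
  refine ⟨⟨upFactor d hm, permFactor d hm, downFactor d hm⟩, ⟨h₁, h₀, h₂, comp_factors_eq hm⟩, ?_⟩
  rintro ⟨d₁, d₀, d₂⟩ ⟨h₁', h₀', h₂', hd⟩
  obtain ⟨e₁, e₀, e₂⟩ := IsTriangular.eq_of_comp_eq ⟨h₁', h₀', h₂'⟩ ⟨h₁, h₀, h₂⟩
    (hd.trans (comp_factors_eq hm).symm)
  exact Prod.ext e₁ (Prod.ext e₀ e₂)
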